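/- Let X, Y be independent Weibull random variables with common β, γ > 0 and scales α_S, α_A > 0 chosen so that E[X] = RS and E[Y] = RA (so α_S = (RS − β)/Γ(1+1/γ), α_A = (RA − β)/Γ(1+1/γ)). Then P(X > Y) = (RS − β)^γ / ((RS − β)^γ + (RA − β)^γ). -/

import Mathlib

open MeasureTheory ProbabilityTheory Real

noncomputable def weibullPDF (α β γ x : ℝ) : ℝ :=
  if β ≤ x then (γ / α) * ((x - β) / α) ^ (γ - 1) * Real.exp (-((x - β) / α) ^ γ) else 0

/-!
Given independence, `P(X > Y) = ∫ f_Y(y) P(X > y) dy`. For a Weibull law with location `β`,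
shape `γ` and rate `k = α^(-γ)`, the density on `[β, ∞)` is `k γ (x-β)^(γ-1) exp(-k (x-β)^γ)`,
the derivative of `-exp(-k (x-β)^γ)`, so `P(X > y) = exp(-k (y-β)^γ)`. The integrand
`f_Y(y) P(X > y)` is therefore `k_Y / (k_Y + k_X)` times a Weibull density of rate `k_Y + k_X`,
giving `P(X > Y) = k_Y / (k_Y + k_X)`. The factor `Γ(1 + 1/γ)^γ` common to both rates cancels,
leaving `(RS - β)^γ / ((RS - β)^γ + (RA - β)^γ)`.
-/

open Set Filter ENNReal

lemma ProbabilityTheory.IndepFun.measure_lt_eq_lintegral {Ω : Type*} [MeasurableSpace Ω]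
    {P : Measure Ω} [IsFiniteMeasure P] {X Y : Ω → ℝ} (hX : Measurable X) (hY : Measurable Y)
    (hind : IndepFun X Y P) :
    P {ω | Y ω < X ω} = ∫⁻ y, P.map X (Ioi y) ∂P.map Y := by
  have hs : MeasurableSet {p : ℝ × ℝ | p.1 < p.2} := measurableSet_lt measurable_fst measurable_snd
  have hmap := (indepFun_iff_map_prod_eq_prod_map_map hY.aemeasurable hX.aemeasurable).1 hind.symm
  change P ((fun ω => (Y ω, X ω)) ⁻¹' {p | p.1 < p.2}) = _
  rw [← Measure.map_apply (hY.prodMk hX) hs, hmap, Measure.prod_apply hs]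
  rfl

lemma rpow_neg_div_rpow_neg_add {a b c γ : ℝ} (ha : 0 < a) (hb : 0 < b) (hc : 0 < c) :
    (b / c) ^ (-γ) / ((b / c) ^ (-γ) + (a / c) ^ (-γ)) = a ^ γ / (a ^ γ + b ^ γ) := by
  have := rpow_pos_of_pos ha γ
  have := rpow_pos_of_pos hb γ
  have := rpow_pos_of_pos hc γ
  rw [div_rpow hb.le hc.le, div_rpow ha.le hc.le, rpow_neg hb.le, rpow_neg ha.le, rpow_neg hc.le]
  field_simp

lemma mul_exp_neg_mul_mul_exp_neg_mul {a b : ℝ} (hab : a + b ≠ 0) (c d u : ℝ) :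
    a * c * d * exp (-(a * u)) * exp (-(b * u)) =
      a / (a + b) * ((a + b) * c * d * exp (-((a + b) * u))) := by
  rw [mul_assoc _ (exp _), ← exp_add, ← neg_add, ← add_mul]
  field_simp

section Weibull

variable {β γ k : ℝ}

lemma hasDerivAt_neg_exp_neg_mul_sub_rpow {x : ℝ} (hx : β < x) :
    HasDerivAt (fun t => -exp (-(k * (t - β) ^ γ)))
      (k * γ * (x - β) ^ (γ - 1) * exp (-(k * (x - β) ^ γ))) x := by
  have hpow : HasDerivAt (fun t => (t - β) ^ γ) (γ * (x - β) ^ (γ - 1)) x := by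
    simpa using ((hasDerivAt_id x).sub_const β).rpow_const (Or.inl (sub_pos.2 hx).ne')
  have h : HasDerivAt (fun t => -exp (-(k * (t - β) ^ γ)))
      (-(exp (-(k * (x - β) ^ γ)) * -(k * (γ * (x - β) ^ (γ - 1))))) x :=
    ((hpow.const_mul k).neg.exp).neg
  convert h using 1
  ring

lemma lintegral_Ioi_weibull_density (hγ : 0 < γ) (hk : 0 < k) {y : ℝ} (hy : β ≤ y) :
    ∫⁻ x in Ioi y, ENNReal.ofReal (k * γ * (x - β) ^ (γ - 1) * exp (-(k * (x - β) ^ γ))) =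
      ENNReal.ofReal (exp (-(k * (y - β) ^ γ))) := by
  have hcont : Continuous (fun t => -exp (-(k * (t - β) ^ γ))) := by
    have : Continuous (fun t => (t - β) ^ γ) :=
      (continuous_id.sub continuous_const).rpow_const fun _ => Or.inr hγ.le
    fun_prop
  have hderiv : ∀ x ∈ Ioi y, HasDerivAt (fun t => -exp (-(k * (t - β) ^ γ)))
      (k * γ * (x - β) ^ (γ - 1) * exp (-(k * (x - β) ^ γ))) x :=
    fun x hx => hasDerivAt_neg_exp_neg_mul_sub_rpow (hy.trans_lt hx)
  have hnonneg : ∀ x ∈ Ioi y, 0 ≤ k * γ * (x - β) ^ (γ - 1) * exp (-(k * (x - β) ^ γ)) := by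
    intro x hx
    have : 0 ≤ (x - β) ^ (γ - 1) := rpow_nonneg (by linarith [mem_Ioi.1 hx]) _
    positivity
  have hlim : Tendsto (fun t => -exp (-(k * (t - β) ^ γ))) atTop (nhds 0) := by
    have hpow : Tendsto (fun t => (t - β) ^ γ) atTop atTop :=
      (tendsto_rpow_atTop hγ).comp (tendsto_atTop_add_const_right _ (-β) tendsto_id)
    simpa using (tendsto_exp_atBot.comp
      (tendsto_neg_atTop_atBot.comp (hpow.const_mul_atTop hk))).neg
  rw [← ofReal_integral_eq_lintegral_ofReal
      (integrableOn_Ioi_deriv_of_nonneg hcont.continuousWithinAt hderiv hnonneg hlim)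
      ((ae_restrict_iff' measurableSet_Ioi).2 (ae_of_all _ hnonneg)),
    integral_Ioi_of_hasDerivAt_of_nonneg hcont.continuousWithinAt hderiv hnonneg hlim]
  simp

lemma weibullPDF_of_le {α x : ℝ} (hα : 0 < α) (hx : β ≤ x) :
    weibullPDF α β γ x =
      α ^ (-γ) * γ * (x - β) ^ (γ - 1) * exp (-(α ^ (-γ) * (x - β) ^ γ)) := by
  have hxβ : 0 ≤ x - β := sub_nonneg.2 hx
  have hα_pow : α ^ γ = α * α ^ (γ - 1) := by
    rw [mul_comm, ← rpow_add_one hα.ne', sub_add_cancel]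
  rw [weibullPDF, if_pos hx, div_rpow hxβ hα.le, div_rpow hxβ hα.le, rpow_neg hα.le, hα_pow]
  field_simp

lemma weibullPDF_of_lt {α x : ℝ} (hx : x < β) : weibullPDF α β γ x = 0 :=
  if_neg hx.not_ge

lemma measurable_weibullPDF (α : ℝ) : Measurable (weibullPDF α β γ) :=
  Measurable.ite measurableSet_Ici (by fun_prop) measurable_const

lemma withDensity_weibullPDF_Ioi {α y : ℝ} (hα : 0 < α) (hγ : 0 < γ) (hy : β ≤ y) :
    volume.withDensity (fun x => ENNReal.ofReal (weibullPDF α β γ x)) (Ioi y) =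
      ENNReal.ofReal (exp (-(α ^ (-γ) * (y - β) ^ γ))) := by
  rw [withDensity_apply _ measurableSet_Ioi, ← lintegral_Ioi_weibull_density hγ
    (rpow_pos_of_pos hα _) hy]
  exact setLIntegral_congr_fun measurableSet_Ioi fun x hx => by
    rw [weibullPDF_of_le hα (hy.trans hx.le)]

lemma lintegral_withDensity_weibullPDF_Ioi {αX αY : ℝ} (hαX : 0 < αX) (hαY : 0 < αY)
    (hγ : 0 < γ) :
    ∫⁻ y, volume.withDensity (fun x => ENNReal.ofReal (weibullPDF αX β γ x)) (Ioi y)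
        ∂volume.withDensity (fun y => ENNReal.ofReal (weibullPDF αY β γ y)) =
      ENNReal.ofReal (αY ^ (-γ) / (αY ^ (-γ) + αX ^ (-γ))) := by
  have hk : 0 < αY ^ (-γ) + αX ^ (-γ) := by positivity
  have hsupport : Function.support (fun y => ENNReal.ofReal (weibullPDF αY β γ y) *
      volume.withDensity (fun x => ENNReal.ofReal (weibullPDF αX β γ x)) (Ioi y)) ⊆ Ici β := by
    intro y hy
    by_contra hyβ
    simp [weibullPDF_of_lt (not_le.1 hyβ)] at hy
  have hdensity : ∀ y ∈ Ici β, ENNReal.ofReal (weibullPDF αY β γ y) *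
      volume.withDensity (fun x => ENNReal.ofReal (weibullPDF αX β γ x)) (Ioi y) =
      ENNReal.ofReal (αY ^ (-γ) / (αY ^ (-γ) + αX ^ (-γ))) * ENNReal.ofReal
        ((αY ^ (-γ) + αX ^ (-γ)) * γ * (y - β) ^ (γ - 1) *
          exp (-((αY ^ (-γ) + αX ^ (-γ)) * (y - β) ^ γ))) := by
    intro y hy
    have : 0 ≤ (y - β) ^ (γ - 1) := rpow_nonneg (sub_nonneg.2 hy) _
    rw [withDensity_weibullPDF_Ioi hαX hγ hy, weibullPDF_of_le hαY hy,
      ← ofReal_mul (by positivity), ← ofReal_mul (by positivity),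
      mul_exp_neg_mul_mul_exp_neg_mul hk.ne']
  rw [lintegral_withDensity_eq_lintegral_mul _ (measurable_weibullPDF αY).ennreal_ofReal
      (Antitone.measurable fun _ _ h => measure_mono (Ioi_subset_Ioi h))]
  simp only [Pi.mul_apply]
  rw [← setLIntegral_eq_of_support_subset hsupport, setLIntegral_congr_fun measurableSet_Ici hdensity,
    lintegral_const_mul' _ _ ofReal_ne_top, ← setLIntegral_congr Ioi_ae_eq_Ici,
    lintegral_Ioi_weibull_density hγ hk le_rfl]
  simp [zero_rpow hγ.ne']

end Weibull

theorem pythagorean_formula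
    {Ω : Type*} [MeasureSpace Ω] [IsProbabilityMeasure (ℙ : Measure Ω)]
    (RS RA β γ : ℝ) (hRS : β < RS) (hRA : β < RA) (hγ : 0 < γ)
    (αS αA : ℝ)
    (hαS : αS = (RS - β) / Real.Gamma (1 + 1 / γ))
    (hαA : αA = (RA - β) / Real.Gamma (1 + 1 / γ))
    (X Y : Ω → ℝ) (hX : Measurable X) (hY : Measurable Y)
    (hXd : Measure.map X ℙ =
      volume.withDensity (fun x => ENNReal.ofReal (weibullPDF αS β γ x)))
    (hYd : Measure.map Y ℙ =
      volume.withDensity (fun y => ENNReal.ofReal (weibullPDF αA β γ y)))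
    (hind : IndepFun X Y ℙ) :
    ℙ {ω | X ω > Y ω} =
      ENNReal.ofReal ((RS - β) ^ γ / ((RS - β) ^ γ + (RA - β) ^ γ)) := by
  have hΓ : 0 < Gamma (1 + 1 / γ) := Gamma_pos_of_pos (by positivity)
  have hαS_pos : 0 < αS := hαS ▸ div_pos (sub_pos.2 hRS) hΓ
  have hαA_pos : 0 < αA := hαA ▸ div_pos (sub_pos.2 hRA) hΓ
  change ℙ {ω | Y ω < X ω} = _
  rw [hind.measure_lt_eq_lintegral hX hY, hXd, hYd,
    lintegral_withDensity_weibullPDF_Ioi hαS_pos hαA_pos hγ, hαS, hαA,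
    rpow_neg_div_rpow_neg_add (sub_pos.2 hRS) (sub_pos.2 hRA) hΓ]
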